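/- Let Λ be a multiplicatively written abelian group, q ∈ Λ a fixed element, and m : H → ℤ a function with m(h̄) = −m(h). Suppose given internal direct sum decompositions V_k = ⊕_{λ∈Λ} V_k(λ) and W_k = ⊕_{λ∈Λ} W_k(λ) (all but finitely many summands zero), and a stable ADHM datum (B,i,j) compatible with the gradings in the sense that B_h(V_{out(h)}(λ)) ⊆ V_{in(h)}(q^{−m(h)−1}·λ), i_k(W_k(λ)) ⊆ V_k(q^{−1}·λ) and j_k(V_k(λ)) ⊆ W_k(q^{−1}·λ) for all h ∈ H, k ∈ I, λ ∈ Λ. Then for every k ∈ I and λ ∈ Λ with V_k(λ) ≠ 0, there exist n ∈ ℤ and l ∈ I such that W_l(q^n·λ) ≠ 0. -/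

import Mathlib

noncomputable section

/-- The data of a finite graph without edge loops, presented by its set `H` of oriented
edges over the vertex set `I`: source and target maps `src`, `tgt`, and a fixed-point-free
orientation-reversing involution `bar`. -/
structure GraphData (I H : Type) where
  src : H → I
  tgt : H → I
  bar : H → H
  bar_invol : ∀ h, bar (bar h) = h
  bar_ne_self : ∀ h, bar h ≠ h
  src_bar : ∀ h, src (bar h) = tgt h
  tgt_bar : ∀ h, tgt (bar h) = src h
  no_loops : ∀ h, src h ≠ tgt h

/-- Transport of the fibres of a family of normed spaces along an equality of indices. -/
def vCast {I : Type} (V : I → Type)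
    [∀ k, NormedAddCommGroup (V k)] [∀ k, NormedSpace ℂ (V k)]
    {k l : I} (e : k = l) : V k ≃L[ℂ] V l := by
  subst e
  exact ContinuousLinearEquiv.refl ℂ (V k)

/-- Stability of an ADHM datum `(B, i, j)`: the only family of subspaces `S k ⊆ V k`
which is `B`-invariant and contained in `ker (j k)` is the zero family. -/
def IsStable {I H : Type} (G : GraphData I H) (V W : I → Type)
    [∀ k, NormedAddCommGroup (V k)] [∀ k, NormedSpace ℂ (V k)]
    [∀ k, NormedAddCommGroup (W k)] [∀ k, NormedSpace ℂ (W k)]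
    (B : ∀ h : H, V (G.src h) →L[ℂ] V (G.tgt h))
    (j : ∀ k : I, V k →L[ℂ] W k) : Prop :=
  ∀ S : ∀ k : I, Submodule ℂ (V k),
    (∀ h : H, ∀ x ∈ S (G.src h), B h x ∈ S (G.tgt h)) →
    (∀ k : I, ∀ x ∈ S k, j k x = 0) →
    ∀ k : I, S k = ⊥

/-- Let `Λ` be a multiplicative abelian group, `q ∈ Λ`, and `m : H → ℤ`
with `m(h̄) = −m(h)`. Given internal direct sum decompositions `V_k = ⊕_λ V_k(λ)`,
`W_k = ⊕_λ W_k(λ)` and a stable ADHM datum compatible with the gradings, every `k, λ`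
with `V_k(λ) ≠ 0` admits `n ∈ ℤ` and `l ∈ I` with `W_l(qⁿ·λ) ≠ 0`. -/
theorem statement8
    {I H : Type} [Fintype I] [Fintype H] [DecidableEq I]
    (G : GraphData I H) (V W : I → Type)
    [∀ k, NormedAddCommGroup (V k)] [∀ k, NormedSpace ℂ (V k)]
    [∀ k, FiniteDimensional ℂ (V k)]
    [∀ k, NormedAddCommGroup (W k)] [∀ k, NormedSpace ℂ (W k)]
    [∀ k, FiniteDimensional ℂ (W k)]
    (Λ : Type) [CommGroup Λ] [DecidableEq Λ] (q : Λ)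
    (m : H → ℤ) (hm : ∀ h : H, m (G.bar h) = - m h)
    (VG : ∀ k : I, Λ → Submodule ℂ (V k))
    (WG : ∀ k : I, Λ → Submodule ℂ (W k))
    (hVG : ∀ k : I, DirectSum.IsInternal (VG k))
    (hWG : ∀ k : I, DirectSum.IsInternal (WG k))
    (B : ∀ h : H, V (G.src h) →L[ℂ] V (G.tgt h))
    (i : ∀ k : I, W k →L[ℂ] V k) (j : ∀ k : I, V k →L[ℂ] W k)
    (hst : IsStable G V W B j)
    (hB : ∀ h : H, ∀ lam : Λ, ∀ x ∈ VG (G.src h) lam,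
      B h x ∈ VG (G.tgt h) (q ^ (-(m h) - 1) * lam))
    (hi : ∀ k : I, ∀ lam : Λ, ∀ w ∈ WG k lam, i k w ∈ VG k (q⁻¹ * lam))
    (hj : ∀ k : I, ∀ lam : Λ, ∀ x ∈ VG k lam, j k x ∈ WG k (q⁻¹ * lam)) :
    ∀ k : I, ∀ lam : Λ, VG k lam ≠ ⊥ →
      ∃ (n : ℤ) (l : I), WG l (q ^ n * lam) ≠ ⊥ := by
  intro k lam hVne
  by_contra hcon
  push_neg at hcon
  have hSbot : ∀ k, (⨆ n : ℤ, VG k (q ^ n * lam)) = ⊥ := by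
    apply hst
    · intro h x hx
      refine Submodule.iSup_induction _ (motive := fun y => B h y ∈ ⨆ n : ℤ, VG (G.tgt h) (q ^ n * lam)) hx ?_ ?_ ?_
      · intro n y hy
        have hmem := hB h (q ^ n * lam) y hy
        have heq : q ^ (-(m h) - 1) * (q ^ n * lam) = q ^ (n - m h - 1) * lam := by
          rw [← mul_assoc, ← zpow_add]
          ring_nf
        rw [heq] at hmem
        exact Submodule.mem_iSup_of_mem (n - m h - 1) hmem
      · simp
      · intro a b ha hb
        rw [map_add]
        exact Submodule.add_mem _ ha hb
    · intro l x hx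
      refine Submodule.iSup_induction _ (motive := fun y => j l y = 0) hx ?_ ?_ ?_
      · intro n y hy
        have hmem := hj l (q ^ n * lam) y hy
        have heq : q⁻¹ * (q ^ n * lam) = q ^ (n - 1) * lam := by
          rw [← mul_assoc, ← zpow_neg_one, ← zpow_add,
            show (-1 : ℤ) + n = n - 1 from by omega]
        rw [heq, hcon (n - 1) l] at hmem
        simpa using hmem
      · simp
      · intro a b ha hb
        rw [map_add, ha, hb, add_zero]
  apply hVne
  rw [eq_bot_iff]
  have hle : VG k lam ≤ ⨆ n : ℤ, VG k (q ^ n * lam) := by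
    have h0 : VG k lam = VG k (q ^ (0 : ℤ) * lam) := by simp
    rw [h0]
    exact le_iSup (fun n : ℤ => VG k (q ^ n * lam)) 0
  rw [hSbot k] at hle
  exact hle
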